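/- For every natural number k, the function f_k : ℝ → ℝ defined by f_k(x) = sqrt((cos(πx) − 1)² + sin²(πx) + (2^{−(k+1)}·x)²) is a norm on the additive group ℝ, i.e. f_k(0) = 0, f_k(x) ≥ 0, f_k(x − y) ≤ f_k(x) + f_k(y) for all x, y ∈ ℝ, and f_k(x) = 0 implies x = 0; moreover f_k(1) > 2 and f_k(2) = 2^{−k}. -/
import Mathlib


open Real

/-- The function `f_k(x) = sqrt((cos(πx) − 1)² + sin²(πx) + (2^{−(k+1)}·x)²)`. -/
noncomputable def windingNorm (k : ℕ) (x : ℝ) : ℝ :=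
  Real.sqrt ((Real.cos (π * x) - 1) ^ 2 + Real.sin (π * x) ^ 2 +
    ((2 : ℝ) ^ (-(k + 1 : ℤ)) * x) ^ 2)

lemma windingNorm_half_angle (θ : ℝ) :
    (Real.cos θ - 1) ^ 2 + Real.sin θ ^ 2 = (2 * Real.sin (θ / 2)) ^ 2 := by
  have h1 := Real.cos_two_mul (θ / 2)
  rw [show 2 * (θ / 2) = θ by ring] at h1
  nlinarith [Real.sin_sq_add_cos_sq θ, Real.sin_sq_add_cos_sq (θ / 2)]

lemma windingNorm_minkowski (a1 b1 a2 b2 : ℝ) (ha1 : 0 ≤ a1) (hb1 : 0 ≤ b1)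
    (ha2 : 0 ≤ a2) (hb2 : 0 ≤ b2) :
    Real.sqrt ((a1 + a2) ^ 2 + (b1 + b2) ^ 2) ≤
      Real.sqrt (a1 ^ 2 + b1 ^ 2) + Real.sqrt (a2 ^ 2 + b2 ^ 2) := by
  have hs1 := Real.sq_sqrt (by positivity : (0:ℝ) ≤ a1 ^ 2 + b1 ^ 2)
  have hs2 := Real.sq_sqrt (by positivity : (0:ℝ) ≤ a2 ^ 2 + b2 ^ 2)
  have hn1 := Real.sqrt_nonneg (a1 ^ 2 + b1 ^ 2)
  have hn2 := Real.sqrt_nonneg (a2 ^ 2 + b2 ^ 2)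
  have cs2 : (a1 * a2 + b1 * b2) ^ 2 ≤ (a1 ^ 2 + b1 ^ 2) * (a2 ^ 2 + b2 ^ 2) := by
    nlinarith [sq_nonneg (a1 * b2 - a2 * b1)]
  have cs : a1 * a2 + b1 * b2 ≤
      Real.sqrt (a1 ^ 2 + b1 ^ 2) * Real.sqrt (a2 ^ 2 + b2 ^ 2) := by
    have h := Real.sqrt_le_sqrt cs2
    rwa [Real.sqrt_sq (by positivity), Real.sqrt_mul (by positivity)] at h
  have key : (a1 + a2) ^ 2 + (b1 + b2) ^ 2 ≤
      (Real.sqrt (a1 ^ 2 + b1 ^ 2) + Real.sqrt (a2 ^ 2 + b2 ^ 2)) ^ 2 := by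
    nlinarith
  calc Real.sqrt ((a1 + a2) ^ 2 + (b1 + b2) ^ 2)
      ≤ Real.sqrt ((Real.sqrt (a1 ^ 2 + b1 ^ 2) + Real.sqrt (a2 ^ 2 + b2 ^ 2)) ^ 2) :=
        Real.sqrt_le_sqrt key
    _ = _ := Real.sqrt_sq (by positivity)

/-- For every `k`, the function `f_k` is a norm on the additive group `ℝ`; moreover
`f_k(1) > 2` and `f_k(2) = 2^{−k}`. -/
theorem windingNorm_is_norm (k : ℕ) :
    windingNorm k 0 = 0 ∧
    (∀ x : ℝ, 0 ≤ windingNorm k x) ∧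
    (∀ x y : ℝ, windingNorm k (x - y) ≤ windingNorm k x + windingNorm k y) ∧
    (∀ x : ℝ, windingNorm k x = 0 → x = 0) ∧
    2 < windingNorm k 1 ∧
    windingNorm k 2 = (2 : ℝ) ^ (-(k : ℤ)) := by
  set c : ℝ := (2 : ℝ) ^ (-(k + 1 : ℤ)) with hc
  have hcpos : 0 < c := by positivity
  have hrepr : ∀ x : ℝ, windingNorm k x =
      Real.sqrt ((2 * |Real.sin (π * x / 2)|) ^ 2 + |c * x| ^ 2) := by
    intro x
    rw [windingNorm, windingNorm_half_angle (π * x),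
      show (2 * |Real.sin (π * x / 2)|) ^ 2 = (2 * Real.sin (π * x / 2)) ^ 2 by
        rw [mul_pow, mul_pow, sq_abs],
      sq_abs]
  refine ⟨?_, fun x => Real.sqrt_nonneg _, ?_, ?_, ?_, ?_⟩
  · simp [windingNorm]
  · intro x y
    rw [hrepr (x - y), hrepr x, hrepr y]
    have hA : 2 * |Real.sin (π * (x - y) / 2)| ≤
        2 * |Real.sin (π * x / 2)| + 2 * |Real.sin (π * y / 2)| := by
      have h : π * (x - y) / 2 = π * x / 2 - π * y / 2 := by ring
      rw [h, Real.sin_sub]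
      have h1 := abs_add_le (Real.sin (π * x / 2) * Real.cos (π * y / 2))
        (-(Real.cos (π * x / 2) * Real.sin (π * y / 2)))
      have h2 := Real.abs_cos_le_one (π * y / 2)
      have h3 := Real.abs_cos_le_one (π * x / 2)
      have h4 := abs_nonneg (Real.sin (π * x / 2))
      have h5 := abs_nonneg (Real.sin (π * y / 2))
      simp only [abs_mul, abs_neg] at h1
      calc 2 * |Real.sin (π * x / 2) * Real.cos (π * y / 2) -
            Real.cos (π * x / 2) * Real.sin (π * y / 2)| = 2 * |Real.sin (π * x / 2) *
            Real.cos (π * y / 2) + -(Real.cos (π * x / 2) * Real.sin (π * y / 2))| := by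
            ring_nf
        _ ≤ _ := by nlinarith
    have hB : |c * (x - y)| ≤ |c * x| + |c * y| := by
      have : c * (x - y) = c * x - c * y := by ring
      rw [this]
      exact abs_sub _ _
    calc Real.sqrt ((2 * |Real.sin (π * (x - y) / 2)|) ^ 2 + |c * (x - y)| ^ 2)
        ≤ Real.sqrt ((2 * |Real.sin (π * x / 2)| + 2 * |Real.sin (π * y / 2)|) ^ 2 +
            (|c * x| + |c * y|) ^ 2) := by
          apply Real.sqrt_le_sqrt
          gcongr
      _ ≤ _ := windingNorm_minkowski _ _ _ _ (by positivity) (abs_nonneg _)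
          (by positivity) (abs_nonneg _)
  · intro x hx
    rw [windingNorm] at hx
    have hle := Real.sqrt_eq_zero'.mp hx
    have hcx : (c * x) ^ 2 = 0 := by
      nlinarith [sq_nonneg (Real.cos (π * x) - 1), sq_nonneg (Real.sin (π * x)),
        sq_nonneg (c * x)]
    have := pow_eq_zero_iff (n := 2) (by norm_num) |>.mp hcx
    rcases mul_eq_zero.mp this with h | h
    · exact absurd h (ne_of_gt hcpos)
    · exact h
  · rw [windingNorm]
    have : π * 1 = π := by ring
    rw [this, Real.cos_pi, Real.sin_pi]
    have h4 : (2 : ℝ) = Real.sqrt 4 := by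
      rw [show (4:ℝ) = 2^2 by norm_num, Real.sqrt_sq (by norm_num)]
    rw [h4]
    apply Real.sqrt_lt_sqrt (by norm_num)
    have : (0:ℝ) < (c * 1) ^ 2 := by positivity
    norm_num
    positivity
  · rw [windingNorm]
    have h2 : π * 2 = 2 * π := by ring
    rw [h2, Real.cos_two_pi, Real.sin_two_pi]
    norm_num
    rw [Real.sqrt_sq (by positivity)]
    rw [show (-(1:ℤ) + -(k:ℤ)) = -(k:ℤ) + (-1) by ring,
      zpow_add₀ (two_ne_zero : (2:ℝ) ≠ 0), zpow_neg, zpow_natCast]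
    norm_num
    ring
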